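/- arXiv:1207.5178 — 5 statements merged into one kernel-verified Lean document; each statement's English description precedes it below -/
import Mathlib

section
/- For α, β > 0 and f a measurable function on (0,∞) for which all integrals converge absolutely, the weighted composition identity I^α_-( t^{-α-β} · I^β_- f )(t) = t^{-β} (I^{α+β}_-( s^{-α} f(s) ))(t) holds for almost all t > 0, where powers of the variable denote multiplication operators. -/
open MeasureTheory Real Set

/-- Right-sided Riemann–Liouville fractional integral of order `α`. -/
noncomputable def RLminus (α : ℝ) (f : ℝ → ℝ) (t : ℝ) : ℝ :=
  (Real.Gamma α)⁻¹ * ∫ s in Ioi t, f s * (s - t) ^ (α - 1)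

/-!
For fixed `t > 0`, both sides are iterated integrals over the triangle `t < s < u` of
`(s - t)^(α-1) s^(-α-β) (u - s)^(β-1) f(u)`. Absolute convergence of the left-hand side lets
us swap the order of integration (Fubini). The substitution `s = t u / (u - w (u - t))` maps
`(0, 1)` onto `(t, u)` and turns the inner integral in `s` into a Beta integral, giving
`B(α, β) t^(-β) u^(-α) (u - t)^(α+β-1)`; finally `B(α, β) / (Γ(α) Γ(β)) = 1 / Γ(α + β)`.
-/

theorem integral_Ioo_rpow_mul_one_sub_rpow {α β : ℝ} (hα : 0 < α) (hβ : 0 < β) :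
    ∫ x in Ioo (0 : ℝ) 1, x ^ (α - 1) * (1 - x) ^ (β - 1) = ProbabilityTheory.beta α β := by
  have hofReal : ∀ x ∈ Ioo (0 : ℝ) 1,
      (x : ℂ) ^ ((α : ℂ) - 1) * (1 - (x : ℂ)) ^ ((β : ℂ) - 1)
        = ((x ^ (α - 1) * (1 - x) ^ (β - 1) : ℝ) : ℂ) := fun x hx => by
    rw [Complex.ofReal_mul, Complex.ofReal_cpow hx.1.le,
      Complex.ofReal_cpow (sub_nonneg.2 hx.2.le)]
    push_cast
    rfl
  rw [ProbabilityTheory.beta_eq_betaIntegralReal α β hα hβ, Complex.betaIntegral,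
    intervalIntegral.integral_of_le zero_le_one, integral_Ioc_eq_integral_Ioo,
    setIntegral_congr_fun measurableSet_Ioo hofReal, integral_complex_ofReal, Complex.ofReal_re]

theorem rpow_mobius_identity {a b c x y D α β : ℝ} (ha : 0 < a) (hb : 0 < b) (hc : 0 < c)
    (hx : 0 < x) (hy : 0 < y) (hD : 0 < D) :
    (a * x * c / D) ^ (α - 1) * (a * b / D) ^ (-α - β) * (b * y * c / D) ^ (β - 1)
        * (a * b * c / D ^ 2)
      = x ^ (α - 1) * y ^ (β - 1) * (a ^ (-β) * b ^ (-α) * c ^ (α + β - 1)) := by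
  refine log_injOn_pos (mem_Ioi.2 (by positivity)) (mem_Ioi.2 (by positivity)) ?_
  simp (disch := positivity) only [log_mul, log_div, log_rpow, log_pow]
  push_cast
  ring

theorem image_mobius_Ioo_zero_one {t u : ℝ} (ht : 0 < t) (htu : t < u) :
    (fun w => t * u / (u - w * (u - t))) '' Ioo 0 1 = Ioo t u := by
  have hu : 0 < u := ht.trans htu
  have hut : 0 < u - t := sub_pos.mpr htu
  ext s
  constructor
  · rintro ⟨w, ⟨hw₀, hw₁⟩, rfl⟩
    have hD : t < u - w * (u - t) := by nlinarith
    have hD₀ : 0 < u - w * (u - t) := ht.trans hD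
    exact ⟨by rw [lt_div_iff₀ hD₀]; nlinarith [mul_pos ht (mul_pos hw₀ hut)],
      by rw [div_lt_iff₀ hD₀]; nlinarith⟩
  · rintro ⟨hts, hsu⟩
    have hs : 0 < s := ht.trans hts
    refine ⟨u * (s - t) / (s * (u - t)), ⟨by apply div_pos <;> nlinarith, ?_⟩, ?_⟩
    · rw [div_lt_one (by nlinarith)]
      nlinarith
    · have hD : u - u * (s - t) / (s * (u - t)) * (u - t) = t * u / s := by
        field_simp
        ring
      simp only [hD]
      field_simp

theorem integral_Ioo_sub_rpow_mul_rpow_mul_sub_rpow {α β t u : ℝ} (hα : 0 < α) (hβ : 0 < β)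
    (ht : 0 < t) (htu : t < u) :
    ∫ s in Ioo t u, (s - t) ^ (α - 1) * s ^ (-α - β) * (u - s) ^ (β - 1)
      = ProbabilityTheory.beta α β * (t ^ (-β) * u ^ (-α) * (u - t) ^ (α + β - 1)) := by
  have hu : 0 < u := ht.trans htu
  have hut : 0 < u - t := sub_pos.mpr htu
  set D : ℝ → ℝ := fun w => u - w * (u - t) with hD_def
  have hD : ∀ w ∈ Ioo (0 : ℝ) 1, t < D w := fun w hw => by nlinarith [hw.2]
  set φ : ℝ → ℝ := fun w => t * u / D w with hφ
  have hderiv : ∀ w ∈ Ioo (0 : ℝ) 1,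
      HasDerivWithinAt φ (t * u * (u - t) / D w ^ 2) (Ioo 0 1) w := fun w hw => by
    have hD' : HasDerivAt D (-(u - t)) w := by
      simpa using ((hasDerivAt_id w).mul_const (u - t)).const_sub u
    exact (((hasDerivAt_const w (t * u)).div hD' (ht.trans (hD w hw)).ne').congr_deriv
      (by ring)).hasDerivWithinAt
  have hmono : StrictMonoOn φ (Ioo 0 1) := fun w₁ _ w₂ hw₂ h => by
    have hD₂ := hD w₂ hw₂
    exact div_lt_div_of_pos_left (by positivity) (by linarith) (by simp only [hD_def]; nlinarith)
  have hpt : ∀ w ∈ Ioo (0 : ℝ) 1,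
      |t * u * (u - t) / D w ^ 2| •
          ((φ w - t) ^ (α - 1) * φ w ^ (-α - β) * (u - φ w) ^ (β - 1))
        = w ^ (α - 1) * (1 - w) ^ (β - 1)
            * (t ^ (-β) * u ^ (-α) * (u - t) ^ (α + β - 1)) := by
    intro w hw
    have hDw : 0 < D w := ht.trans (hD w hw)
    have hleft : φ w - t = t * w * (u - t) / D w := by
      simp only [hφ]
      field_simp
      simp only [hD_def]
      ring
    have hright : u - φ w = u * (1 - w) * (u - t) / D w := by
      simp only [hφ]
      field_simp
      simp only [hD_def]
      ring
    rw [hleft, hright, abs_of_pos (by positivity), smul_eq_mul, mul_comm,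
      rpow_mobius_identity ht hu hut hw.1 (by linarith [hw.2]) hDw]
  rw [← image_mobius_Ioo_zero_one ht htu,
    integral_image_eq_integral_abs_deriv_smul measurableSet_Ioo hderiv hmono.injOn,
    setIntegral_congr_fun measurableSet_Ioo hpt, integral_mul_const,
    integral_Ioo_rpow_mul_one_sub_rpow hα hβ]

theorem integral_Ioi_integral_Ioi_eq_integral_Ioi_integral_Ioo {E : Type*}
    [NormedAddCommGroup E] [NormedSpace ℝ E] {G : ℝ → ℝ → E} {t : ℝ}
    (hG : StronglyMeasurable (Function.uncurry G))
    (hfin : ∫⁻ s in Ioi t, ∫⁻ u in Ioi s, ‖G s u‖ₑ < ⊤) :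
    ∫ s in Ioi t, ∫ u in Ioi s, G s u = ∫ u in Ioi t, ∫ s in Ioo t u, G s u := by
  set H : ℝ × ℝ → E := {p | p.1 < p.2}.indicator (Function.uncurry G)
  have hH : StronglyMeasurable H := hG.indicator (measurableSet_lt measurable_fst measurable_snd)
  have hsection : ∀ s u, H (s, u) = (Ioi s).indicator (G s) u := fun s u => by
    simp only [H, indicator_apply, mem_ofPred_eq, mem_Ioi, Function.uncurry_apply_pair]
  have hsection' : ∀ s u, H (s, u) = (Iio u).indicator (fun s => G s u) s := fun s u => by
    simp only [H, indicator_apply, mem_ofPred_eq, mem_Iio, Function.uncurry_apply_pair]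
  have hint : Integrable H ((volume.restrict (Ioi t)).prod (volume.restrict (Ioi t))) := by
    refine ⟨hH.aestronglyMeasurable, ?_⟩
    rw [hasFiniteIntegral_iff_enorm, lintegral_prod _ hH.enorm.aemeasurable]
    refine lt_of_eq_of_lt (setLIntegral_congr_fun measurableSet_Ioi fun s hs => ?_) hfin
    simp only [hsection, enorm_indicator_eq_indicator_enorm]
    rw [lintegral_indicator measurableSet_Ioi,
      Measure.restrict_restrict_of_subset (Ioi_subset_Ioi (le_of_lt hs))]
  calc ∫ s in Ioi t, ∫ u in Ioi s, G s u = ∫ s in Ioi t, ∫ u in Ioi t, H (s, u) :=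
        setIntegral_congr_fun measurableSet_Ioi fun s hs => by
          rw [← Measure.restrict_restrict_of_subset (Ioi_subset_Ioi (le_of_lt hs)),
            ← integral_indicator measurableSet_Ioi]
          simp only [hsection]
    _ = ∫ u in Ioi t, ∫ s in Ioi t, H (s, u) :=
        integral_integral_swap (f := fun s u => H (s, u)) hint
    _ = ∫ u in Ioi t, ∫ s in Ioo t u, G s u := by
        refine integral_congr_ae (Filter.Eventually.of_forall fun u => ?_)
        simp only [hsection']
        rw [integral_indicator measurableSet_Iio, Measure.restrict_restrict measurableSet_Iio,
          inter_comm, Ioi_inter_Iio]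

theorem RLminus_rpow_mul_RLminus {α β t : ℝ} (hα : 0 < α) (hβ : 0 < β) (ht : 0 < t)
    {f : ℝ → ℝ} (hf : Measurable f)
    (habs : ∫⁻ s in Ioi t, ENNReal.ofReal ((s - t) ^ (α - 1) * s ^ (-α - β)) *
        (∫⁻ u in Ioi s, ENNReal.ofReal (|f u| * (u - s) ^ (β - 1))) < ⊤) :
    RLminus α (fun s => s ^ (-α - β) * RLminus β f s) t
      = t ^ (-β) * RLminus (α + β) (fun s => s ^ (-α) * f s) t := by
  set G : ℝ → ℝ → ℝ := fun s u =>
    (s - t) ^ (α - 1) * s ^ (-α - β) * (f u * (u - s) ^ (β - 1))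
  have hG : StronglyMeasurable (Function.uncurry G) :=
    Measurable.stronglyMeasurable (by simp only [G, Function.uncurry_def]; fun_prop)
  have hfin : ∫⁻ s in Ioi t, ∫⁻ u in Ioi s, ‖G s u‖ₑ < ⊤ := by
    refine lt_of_eq_of_lt (setLIntegral_congr_fun measurableSet_Ioi fun s hs => ?_) habs
    rw [← lintegral_const_mul' _ _ ENNReal.ofReal_ne_top]
    refine setLIntegral_congr_fun measurableSet_Ioi fun u hu => ?_
    have hts : t < s := hs
    have hK : 0 ≤ (s - t) ^ (α - 1) * s ^ (-α - β) :=
      mul_nonneg (rpow_nonneg (by linarith) _) (rpow_nonneg (by linarith) _)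
    rw [Real.enorm_eq_ofReal_abs, ← ENNReal.ofReal_mul hK, abs_mul, abs_of_nonneg hK, abs_mul,
      abs_of_nonneg (rpow_nonneg (by linarith [mem_Ioi.1 hu]) _)]
  have hinner : ∀ u ∈ Ioi t, ∫ s in Ioo t u, G s u
      = ProbabilityTheory.beta α β * t ^ (-β) * (u ^ (-α) * f u * (u - t) ^ (α + β - 1)) := by
    intro u hu
    calc ∫ s in Ioo t u, G s u
        = f u * ∫ s in Ioo t u, (s - t) ^ (α - 1) * s ^ (-α - β) * (u - s) ^ (β - 1) := by
          rw [← integral_const_mul]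
          congr 1 with s
          ring
      _ = _ := by
          rw [integral_Ioo_sub_rpow_mul_rpow_mul_sub_rpow hα hβ ht hu]
          ring
  calc RLminus α (fun s => s ^ (-α - β) * RLminus β f s) t
        = (Gamma α)⁻¹ * (Gamma β)⁻¹ * ∫ s in Ioi t, ∫ u in Ioi s, G s u := by
          rw [RLminus, mul_assoc, ← integral_const_mul (Gamma β)⁻¹]
          congr 1
          refine setIntegral_congr_fun measurableSet_Ioi fun s _ => ?_
          simp only [G, RLminus, integral_const_mul]
          ring
    _ = (Gamma α)⁻¹ * (Gamma β)⁻¹ * ∫ u in Ioi t, ∫ s in Ioo t u, G s u := by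
          rw [integral_Ioi_integral_Ioi_eq_integral_Ioi_integral_Ioo hG hfin]
    _ = t ^ (-β) * RLminus (α + β) (fun s => s ^ (-α) * f s) t := by
          rw [setIntegral_congr_fun measurableSet_Ioi hinner, integral_const_mul, RLminus,
            ProbabilityTheory.beta]
          field_simp [(Gamma_pos_of_pos hα).ne', (Gamma_pos_of_pos hβ).ne']

theorem rl_minus_weighted_composition_general (α β : ℝ) (hα : 0 < α) (hβ : 0 < β) (f : ℝ → ℝ)
    (hmeas : Measurable f)
    (habs₂ : ∀ t > (0 : ℝ),
      ∫⁻ s in Ioi t, ENNReal.ofReal ((s - t) ^ (α - 1) * s ^ (-α - β)) *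
        (∫⁻ u in Ioi s, ENNReal.ofReal (|f u| * (u - s) ^ (β - 1))) < ⊤) :
    ∀ᵐ t ∂(volume.restrict (Ioi (0 : ℝ))),
      RLminus α (fun s => s ^ (-α - β) * RLminus β f s) t
        = t ^ (-β) * RLminus (α + β) (fun s => s ^ (-α) * f s) t :=
  ae_restrict_of_forall_mem measurableSet_Ioi fun t ht =>
    RLminus_rpow_mul_RLminus hα hβ ht hmeas (habs₂ t ht)

/-- The weighted composition identity
`I^α_-( s^{-α-β} (I^β_- f)(s) )(t) = t^{-β} (I^{α+β}_-( s^{-α} f(s) ))(t)` for a.e. `t > 0`,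
provided all the integrals converge absolutely. -/
theorem rl_minus_weighted_composition (α β : ℝ) (hα : 0 < α) (hβ : 0 < β) (f : ℝ → ℝ)
    (hmeas : Measurable f)
    (habs₁ : ∀ t > (0 : ℝ),
      ∫⁻ s in Ioi t, ENNReal.ofReal (|f s| * s ^ (-α) * (s - t) ^ (α + β - 1)) < ⊤)
    (habs₂ : ∀ t > (0 : ℝ),
      ∫⁻ s in Ioi t, ENNReal.ofReal ((s - t) ^ (α - 1) * s ^ (-α - β)) *
        (∫⁻ u in Ioi s, ENNReal.ofReal (|f u| * (u - s) ^ (β - 1))) < ⊤) :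
    ∀ᵐ t ∂(volume.restrict (Ioi (0 : ℝ))),
      RLminus α (fun s => s ^ (-α - β) * RLminus β f s) t
        = t ^ (-β) * RLminus (α + β) (fun s => s ^ (-α) * f s) t :=
  rl_minus_weighted_composition_general α β hα hβ f hmeas habs₂
end

section
/- Let f be a locally integrable function on (0,∞) and α > 0. If ∫₁^∞ |f(s)| s^{2α-1} ds < ∞, then the modified Erdélyi–Kober integral (I^α_{-,2} f)(t) = (2/Γ(α)) ∫_t^∞ f(s) s (s²-t²)^{α-1} ds is finite for almost all t > 0. If f is nonnegative and ∫₁^∞ f(s) s^{2α-1} ds = ∞, then (I^α_{-,2} f)(t) = ∞ for every t ≥ 0. -/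
open MeasureTheory Real Set

/-!
Write `k_t(s) = s (s² - t²)^(α-1)`. For `s ≥ 2t` one has `s² - t² ≍ s²`, hence
`k_t(s) ≍ s^(2α-1)` with constants depending only on `α`; this gives the divergence statement and
controls the tail `s ≥ b` of the integral. On a bounded window `t < s < b` the factor
`s (s + t)^(α-1)` is bounded, leaving only the singularity `(s - t)^(α-1)`. Integrability of
`s ↦ f(s) (s - t)^(α-1)` on `(t, b)` is the existence at `t` of the convolution of `f 1_{(a,b)}`
with the reflection of `u^(α-1) 1_{(0, b-a)}`; both are integrable (the latter since `α > 0`),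
so the convolution exists for almost every `t`.
-/

section RpowComparison

variable {x y θ β : ℝ}

lemma rpow_le_max_one_mul_rpow (hθ : 0 < θ) (hy : 0 < y) (hθx : θ * y ≤ x) (hxy : x ≤ y) :
    x ^ β ≤ max 1 (θ ^ β) * y ^ β := by
  rcases le_or_gt 0 β with hβ | hβ
  · calc x ^ β ≤ y ^ β := rpow_le_rpow ((mul_pos hθ hy).le.trans hθx) hxy hβ
      _ ≤ max 1 (θ ^ β) * y ^ β := le_mul_of_one_le_left (by positivity) (le_max_left _ _)
  · calc x ^ β ≤ (θ * y) ^ β := rpow_le_rpow_of_nonpos (by positivity) hθx hβ.le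
      _ = θ ^ β * y ^ β := mul_rpow hθ.le hy.le
      _ ≤ max 1 (θ ^ β) * y ^ β := by gcongr; exact le_max_right _ _

lemma min_one_mul_rpow_le_rpow (hθ : 0 < θ) (hy : 0 < y) (hθx : θ * y ≤ x) (hxy : x ≤ y) :
    min 1 (θ ^ β) * y ^ β ≤ x ^ β := by
  rcases le_or_gt 0 β with hβ | hβ
  · calc min 1 (θ ^ β) * y ^ β ≤ θ ^ β * y ^ β := by gcongr; exact min_le_right _ _
      _ = (θ * y) ^ β := (mul_rpow hθ.le hy.le).symm
      _ ≤ x ^ β := rpow_le_rpow (by positivity) hθx hβ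
  · calc min 1 (θ ^ β) * y ^ β ≤ y ^ β :=
          mul_le_of_le_one_left (by positivity) (min_le_left _ _)
      _ ≤ x ^ β := rpow_le_rpow_of_nonpos ((mul_pos hθ hy).trans_le hθx) hxy hβ.le

end RpowComparison

section KernelBounds

variable {α t s : ℝ}

lemma mul_sq_rpow_sub_one (hs : 0 < s) : s * (s ^ 2) ^ (α - 1) = s ^ (2 * α - 1) := by
  rw [← rpow_natCast, ← rpow_mul hs.le, show 2 * α - 1 = 1 + ((2 : ℕ) : ℝ) * (α - 1) by
    push_cast; ring, rpow_add hs, rpow_one]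

lemma norm_mul_mul_sq_sub_sq_rpow (f : ℝ → ℝ) (ht : 0 ≤ t) (hts : t ≤ s) :
    ‖f s * s * (s ^ 2 - t ^ 2) ^ (α - 1)‖ = |f s| * (s * (s ^ 2 - t ^ 2) ^ (α - 1)) := by
  have hsq : 0 ≤ s ^ 2 - t ^ 2 := by nlinarith
  rw [Real.norm_eq_abs, abs_mul, abs_mul, abs_of_nonneg (ht.trans hts),
    abs_of_nonneg (rpow_nonneg hsq _), mul_assoc]

lemma exists_mul_sq_sub_sq_rpow_le_mul_rpow_sub (ht : 0 < t) (b : ℝ) :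
    ∃ C, ∀ s ∈ Ioo t b, s * (s ^ 2 - t ^ 2) ^ (α - 1) ≤ C * (s - t) ^ (α - 1) := by
  refine ⟨b * (max 1 ((t / b) ^ (α - 1)) * (2 * b) ^ (α - 1)), fun s hs => ?_⟩
  have hb : 0 < b := ht.trans (hs.1.trans hs.2)
  have hsum : (s + t) ^ (α - 1) ≤ max 1 ((t / b) ^ (α - 1)) * (2 * b) ^ (α - 1) :=
    rpow_le_max_one_mul_rpow (div_pos ht hb) (by positivity)
      (by rw [div_mul_eq_mul_div, mul_div_assoc, mul_div_cancel_right₀ _ hb.ne']; linarith [hs.1])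
      (by linarith [hs.1, hs.2])
  calc s * (s ^ 2 - t ^ 2) ^ (α - 1) = s * (s + t) ^ (α - 1) * (s - t) ^ (α - 1) := by
        rw [show s ^ 2 - t ^ 2 = (s + t) * (s - t) by ring,
          mul_rpow (by linarith [hs.1]) (by linarith [hs.1])]
        ring
    _ ≤ b * (max 1 ((t / b) ^ (α - 1)) * (2 * b) ^ (α - 1)) * (s - t) ^ (α - 1) := by
        have hst : 0 ≤ s - t := by linarith [hs.1]
        gcongr
        · exact rpow_nonneg (by linarith [hs.1]) _
        · exact hs.2.le

lemma exists_mul_sq_sub_sq_rpow_le_rpow (ht : 0 ≤ t) :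
    ∃ C, ∀ s > 0, 2 * t ≤ s → s * (s ^ 2 - t ^ 2) ^ (α - 1) ≤ C * s ^ (2 * α - 1) := by
  refine ⟨max 1 ((3 / 4) ^ (α - 1)), fun s hs hts => ?_⟩
  calc s * (s ^ 2 - t ^ 2) ^ (α - 1) ≤ s * (max 1 ((3 / 4) ^ (α - 1)) * (s ^ 2) ^ (α - 1)) := by
        gcongr
        exact rpow_le_max_one_mul_rpow (by norm_num) (by positivity) (by nlinarith) (by nlinarith)
    _ = max 1 ((3 / 4) ^ (α - 1)) * s ^ (2 * α - 1) := by rw [← mul_sq_rpow_sub_one hs]; ring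

lemma exists_pos_mul_rpow_le_mul_sq_sub_sq_rpow (ht : 0 ≤ t) :
    ∃ c > 0, ∀ s > 0, 2 * t ≤ s → c * s ^ (2 * α - 1) ≤ s * (s ^ 2 - t ^ 2) ^ (α - 1) := by
  refine ⟨min 1 ((3 / 4) ^ (α - 1)), lt_min one_pos (by positivity), fun s hs hts => ?_⟩
  calc min 1 ((3 / 4) ^ (α - 1)) * s ^ (2 * α - 1)
      = s * (min 1 ((3 / 4) ^ (α - 1)) * (s ^ 2) ^ (α - 1)) := by
        rw [← mul_sq_rpow_sub_one hs]; ring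
    _ ≤ s * (s ^ 2 - t ^ 2) ^ (α - 1) := by
        gcongr
        exact min_one_mul_rpow_le_rpow (by norm_num) (by positivity) (by nlinarith) (by nlinarith)

end KernelBounds

lemma ae_restrict_Ioi_zero_of_forall_Ioo {μ : Measure ℝ} {p : ℝ → Prop}
    (h : ∀ a b, 0 < a → ∀ᵐ t ∂μ, t ∈ Ioo a b → p t) : ∀ᵐ t ∂μ.restrict (Ioi 0), p t := by
  have hcover : Ioi (0 : ℝ) ⊆ ⋃ n : ℕ, Ioo ((n : ℝ) + 1)⁻¹ ((n : ℝ) + 1) := by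
    intro t (ht : 0 < t)
    obtain ⟨n, hn⟩ := exists_nat_gt (t + t⁻¹)
    have hinv : t⁻¹ < (n : ℝ) + 1 := by linarith [inv_pos.2 ht]
    exact mem_iUnion.2 ⟨n, (inv_lt_comm₀ (by positivity) ht).2 hinv, by linarith [inv_pos.2 ht]⟩
  refine ae_restrict_of_ae_restrict_of_subset hcover <| (ae_restrict_iUnion_iff _ _).2 fun n => ?_
  exact (ae_restrict_iff' measurableSet_Ioo).2 (h _ _ (by positivity))

section Integrability

variable {α : ℝ} {f : ℝ → ℝ}

lemma ae_integrableOn_mul_rpow_sub (hα : 0 < α) {a b : ℝ} (hf : IntegrableOn f (Ioo a b)) :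
    ∀ᵐ t, t ∈ Ioo a b → IntegrableOn (fun s => f s * (s - t) ^ (α - 1)) (Ioo t b) := by
  rcases le_or_gt b a with hba | hab
  · exact .of_forall fun t ht => absurd (ht.1.trans ht.2) hba.not_gt
  set F := (Ioo a b).indicator f
  set H := (Ioo 0 (b - a)).indicator fun u : ℝ => u ^ (α - 1)
  have hF : Integrable F := (integrable_indicator_iff measurableSet_Ioo).2 hf
  have hH : Integrable H := (integrable_indicator_iff measurableSet_Ioo).2 <|
    (intervalIntegral.integrableOn_Ioo_rpow_iff (sub_pos.2 hab)).2 (by linarith)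
  filter_upwards [hF.ae_convolution_exists (ContinuousLinearMap.mul ℝ ℝ) hH.comp_neg]
    with t hconv ht
  have hFH : Integrable fun s => F s * H (s - t) := by
    simpa [ConvolutionExistsAt, ContinuousLinearMap.mul_apply'] using hconv
  refine hFH.integrableOn.congr_fun (fun s hs => ?_) measurableSet_Ioo
  have hsF : s ∈ Ioo a b := ⟨ht.1.trans hs.1, hs.2⟩
  have hsH : s - t ∈ Ioo 0 (b - a) := ⟨by linarith [hs.1], by linarith [hs.2, ht.1]⟩
  simp only [F, H, indicator_of_mem hsF, indicator_of_mem hsH]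

lemma integrableOn_Ioi_mul_mul_sq_sub_sq_rpow {t b : ℝ} (ht : 0 < t) (htb : 2 * t ≤ b)
    (hf : AEStronglyMeasurable f (volume.restrict (Ioi t)))
    (hnear : IntegrableOn (fun s => f s * (s - t) ^ (α - 1)) (Ioo t b))
    (hfar : IntegrableOn (fun s => |f s| * s ^ (2 * α - 1)) (Ici b)) :
    IntegrableOn (fun s => f s * s * (s ^ 2 - t ^ 2) ^ (α - 1)) (Ioi t) := by
  have hmeas : AEStronglyMeasurable (fun s => f s * s * (s ^ 2 - t ^ 2) ^ (α - 1))
      (volume.restrict (Ioi t)) :=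
    (hf.mul measurable_id.aestronglyMeasurable).mul (by fun_prop : Measurable fun s : ℝ =>
      (s ^ 2 - t ^ 2) ^ (α - 1)).aestronglyMeasurable
  obtain ⟨C, hC⟩ := exists_mul_sq_sub_sq_rpow_le_mul_rpow_sub (α := α) ht b
  obtain ⟨D, hD⟩ := exists_mul_sq_sub_sq_rpow_le_rpow (α := α) ht.le
  rw [← Ioo_union_Ici_eq_Ioi (by linarith : t < b)]
  refine IntegrableOn.union ?_ ?_
  · refine (hnear.norm.const_mul C).mono' (hmeas.mono_set Ioo_subset_Ioi_self) <|
      (ae_restrict_iff' measurableSet_Ioo).2 (.of_forall fun s hs => ?_)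
    have hst : 0 ≤ s - t := by linarith [hs.1]
    calc ‖f s * s * (s ^ 2 - t ^ 2) ^ (α - 1)‖
        = |f s| * (s * (s ^ 2 - t ^ 2) ^ (α - 1)) :=
          norm_mul_mul_sq_sub_sq_rpow f ht.le hs.1.le
      _ ≤ |f s| * (C * (s - t) ^ (α - 1)) := mul_le_mul_of_nonneg_left (hC s hs) (abs_nonneg _)
      _ = C * ‖f s * (s - t) ^ (α - 1)‖ := by
          rw [norm_mul, Real.norm_eq_abs, Real.norm_of_nonneg (rpow_nonneg hst _)]; ring
  · refine (hfar.const_mul D).mono' (hmeas.mono_set (Ici_subset_Ioi.2 (by linarith))) <|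
      (ae_restrict_iff' measurableSet_Ici).2 (.of_forall fun s hs => ?_)
    have hs : 2 * t ≤ s := htb.trans hs
    calc ‖f s * s * (s ^ 2 - t ^ 2) ^ (α - 1)‖
        = |f s| * (s * (s ^ 2 - t ^ 2) ^ (α - 1)) :=
          norm_mul_mul_sq_sub_sq_rpow f ht.le (by linarith)
      _ ≤ |f s| * (D * s ^ (2 * α - 1)) :=
          mul_le_mul_of_nonneg_left (hD s (by linarith) hs) (abs_nonneg _)
      _ = D * (|f s| * s ^ (2 * α - 1)) := by ring

lemma ae_integrableOn_Ioi_mul_mul_sq_sub_sq_rpow (hα : 0 < α)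
    (hloc : LocallyIntegrableOn f (Ioi 0))
    (hint : IntegrableOn (fun s => |f s| * s ^ (2 * α - 1)) (Ioi 1)) :
    ∀ᵐ t ∂volume.restrict (Ioi 0),
      IntegrableOn (fun s => f s * s * (s ^ 2 - t ^ 2) ^ (α - 1)) (Ioi t) := by
  refine ae_restrict_Ioi_zero_of_forall_Ioo fun a b ha => ?_
  set c := 2 * b + 1 with hc
  have hfc : IntegrableOn f (Ioo a c) :=
    (hloc.integrableOn_compact_subset (fun s hs => ha.trans_le hs.1) isCompact_Icc).mono_set
      Ioo_subset_Icc_self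
  filter_upwards [ae_integrableOn_mul_rpow_sub hα hfc] with t hnear ht
  have ht0 : 0 < t := ha.trans ht.1
  have hb : 0 < b := ht0.trans ht.2
  have htc : 2 * t ≤ c := by linarith [ht.2]
  exact integrableOn_Ioi_mul_mul_sq_sub_sq_rpow ht0 htc
    (hloc.aestronglyMeasurable.mono_set (Ioi_subset_Ioi ht0.le))
    (hnear ⟨ht.1, by linarith⟩) (hint.mono_set (Ici_subset_Ioi.2 (by linarith)))

end Integrability

section Divergence

lemma setLIntegral_Ioi_eq_top_of_le {F : ℝ → ℝ} {a b : ℝ} (hab : a ≤ b)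
    (hF : IntegrableOn F (Ioc a b)) (h : ∫⁻ s in Ioi a, ENNReal.ofReal (F s) = ⊤) :
    ∫⁻ s in Ioi b, ENNReal.ofReal (F s) = ⊤ := by
  rw [← Ioc_union_Ioi_eq_Ioi hab, lintegral_union measurableSet_Ioi (Ioc_disjoint_Ioi le_rfl)] at h
  exact (ENNReal.add_eq_top.1 h).resolve_left hF.setLIntegral_lt_top.ne

lemma setLIntegral_Ioi_mul_mul_sq_sub_sq_rpow_eq_top {α : ℝ} {f : ℝ → ℝ}
    (hloc : LocallyIntegrableOn f (Ioi 0)) (hpos : ∀ s ∈ Ioi (0 : ℝ), 0 ≤ f s)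
    (hdiv : ∫⁻ s in Ioi 1, ENNReal.ofReal (f s * s ^ (2 * α - 1)) = ⊤) {t : ℝ} (ht : 0 ≤ t) :
    ∫⁻ s in Ioi t, ENNReal.ofReal (f s * s * (s ^ 2 - t ^ 2) ^ (α - 1)) = ⊤ := by
  set T := max 1 (2 * t)
  obtain ⟨c, hc, hle⟩ := exists_pos_mul_rpow_le_mul_sq_sub_sq_rpow (α := α) ht
  have hfT : IntegrableOn (fun s => f s * s ^ (2 * α - 1)) (Icc 1 T) :=
    (hloc.integrableOn_compact_subset (fun s hs => one_pos.trans_le hs.1) isCompact_Icc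
      ).mul_continuousOn (continuousOn_id.rpow_const fun s hs => Or.inl
        (one_pos.trans_le hs.1).ne') isCompact_Icc
  have htail : ∫⁻ s in Ioi T, ENNReal.ofReal (f s * s ^ (2 * α - 1)) = ⊤ :=
    setLIntegral_Ioi_eq_top_of_le (le_max_left _ _) (hfT.mono_set Ioc_subset_Icc_self) hdiv
  have hpoint : ∀ s ∈ Ioi T, ENNReal.ofReal c * ENNReal.ofReal (f s * s ^ (2 * α - 1)) ≤
      ENNReal.ofReal (f s * s * (s ^ 2 - t ^ 2) ^ (α - 1)) := by
    intro s (hs : T < s)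
    have hs0 : 0 < s := by linarith [le_max_left 1 (2 * t)]
    rw [← ENNReal.ofReal_mul hc.le]
    refine ENNReal.ofReal_le_ofReal ?_
    calc c * (f s * s ^ (2 * α - 1)) = f s * (c * s ^ (2 * α - 1)) := by ring
      _ ≤ f s * (s * (s ^ 2 - t ^ 2) ^ (α - 1)) :=
          mul_le_mul_of_nonneg_left (hle s hs0 (by linarith [le_max_right 1 (2 * t)]))
            (hpos s hs0)
      _ = f s * s * (s ^ 2 - t ^ 2) ^ (α - 1) := by ring
  refine top_le_iff.1 ?_
  calc ⊤ = ENNReal.ofReal c * ∫⁻ s in Ioi T, ENNReal.ofReal (f s * s ^ (2 * α - 1)) := by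
        rw [htail, ENNReal.mul_top (ENNReal.ofReal_pos.2 hc).ne']
    _ = ∫⁻ s in Ioi T, ENNReal.ofReal c * ENNReal.ofReal (f s * s ^ (2 * α - 1)) :=
        (lintegral_const_mul' _ _ ENNReal.ofReal_ne_top).symm
    _ ≤ ∫⁻ s in Ioi T, ENNReal.ofReal (f s * s * (s ^ 2 - t ^ 2) ^ (α - 1)) :=
        setLIntegral_mono' measurableSet_Ioi hpoint
    _ ≤ ∫⁻ s in Ioi t, ENNReal.ofReal (f s * s * (s ^ 2 - t ^ 2) ^ (α - 1)) :=
        lintegral_mono_set (Ioi_subset_Ioi (by linarith [le_max_right 1 (2 * t)]))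

end Divergence

theorem ek_minus_finite_ae_and_infinite_general (α : ℝ) (hα : 0 < α) (f : ℝ → ℝ)
    (hloc : LocallyIntegrableOn f (Ioi (0 : ℝ))) :
    (IntegrableOn (fun s => |f s| * s ^ (2 * α - 1)) (Ioi (1 : ℝ)) →
      ∀ᵐ t ∂(volume.restrict (Ioi (0 : ℝ))),
        IntegrableOn (fun s => f s * s * (s ^ 2 - t ^ 2) ^ (α - 1)) (Ioi t)) ∧
    ((∀ s ∈ Ioi (0 : ℝ), 0 ≤ f s) →
      (∫⁻ s in Ioi (1 : ℝ), ENNReal.ofReal (f s * s ^ (2 * α - 1)) = ⊤) →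
      ∀ t : ℝ, 0 ≤ t →
        ∫⁻ s in Ioi t, ENNReal.ofReal (f s * s * (s ^ 2 - t ^ 2) ^ (α - 1)) = ⊤) :=
  ⟨ae_integrableOn_Ioi_mul_mul_sq_sub_sq_rpow hα hloc,
    fun hpos hdiv _ ht => setLIntegral_Ioi_mul_mul_sq_sub_sq_rpow_eq_top hloc hpos hdiv ht⟩

/-- Finiteness and divergence of the modified Erdélyi–Kober integral
`(I^α_{-,2} f)(t) = (2/Γ(α)) ∫_t^∞ f(s) s (s²-t²)^{α-1} ds`:
if `∫₁^∞ |f(s)| s^{2α-1} ds < ∞` it converges absolutely for a.e. `t > 0`;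
if `f ≥ 0` and `∫₁^∞ f(s) s^{2α-1} ds = ∞` it is `∞` for every `t ≥ 0`. -/
theorem ek_minus_finite_ae_and_infinite (α : ℝ) (hα : 0 < α) (f : ℝ → ℝ)
    (hmeas : Measurable f)
    (hloc : LocallyIntegrableOn f (Ioi (0 : ℝ))) :
    (IntegrableOn (fun s => |f s| * s ^ (2 * α - 1)) (Ioi (1 : ℝ)) →
      ∀ᵐ t ∂(volume.restrict (Ioi (0 : ℝ))),
        IntegrableOn (fun s => f s * s * (s ^ 2 - t ^ 2) ^ (α - 1)) (Ioi t)) ∧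
    ((∀ s ∈ Ioi (0 : ℝ), 0 ≤ f s) →
      (∫⁻ s in Ioi (1 : ℝ), ENNReal.ofReal (f s * s ^ (2 * α - 1)) = ⊤) →
      ∀ t : ℝ, 0 ≤ t →
        ∫⁻ s in Ioi t, ENNReal.ofReal (f s * s * (s ^ 2 - t ^ 2) ^ (α - 1)) = ⊤) :=
  ek_minus_finite_ae_and_infinite_general α hα f hloc
end

section
/- For α, β > 0 and f measurable on (0,∞) such that all integrals converge absolutely, the modified Erdélyi–Kober integrals satisfy the semigroup property I^α_{±,2} (I^β_{±,2} f) = I^{α+β}_{±,2} f almost everywhere on (0,∞). -/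
/-! Composing two Erdélyi–Kober integrals and exchanging the order of integration (Fubini,
justified by the absolute convergence hypothesis) reduces the semigroup law to the kernel identity
`∫_a^b s (s² - a²)^(α-1) (b² - s²)^(β-1) ds = B(α, β) / 2 · (b² - a²)^(α+β-1)`,
which the substitution `x = (s² - a²) / (b² - a²)` turns into Euler's Beta integral;
`B(α, β) = Γ(α) Γ(β) / Γ(α + β)` then makes the normalising constants match. -/

open MeasureTheory Real Set

/-- Left-sided modified Erdélyi–Kober fractional integral of order `α`. -/
noncomputable def EKplus (α : ℝ) (f : ℝ → ℝ) (t : ℝ) : ℝ :=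
  2 * (Real.Gamma α)⁻¹ * ∫ s in Ioc (0 : ℝ) t, f s * s * (t ^ 2 - s ^ 2) ^ (α - 1)

/-- Right-sided modified Erdélyi–Kober fractional integral of order `α`. -/
noncomputable def EKminus (α : ℝ) (f : ℝ → ℝ) (t : ℝ) : ℝ :=
  2 * (Real.Gamma α)⁻¹ * ∫ s in Ioi t, f s * s * (s ^ 2 - t ^ 2) ^ (α - 1)

open ProbabilityTheory

theorem integrableOn_and_integral_rpow_mul_one_sub_rpow {α β : ℝ} (hα : 0 < α)
    (hβ : 0 < β) :
    IntegrableOn (fun x : ℝ => x ^ (α - 1) * (1 - x) ^ (β - 1)) (Ioo 0 1) ∧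
      ∫ x in Ioo (0 : ℝ) 1, x ^ (α - 1) * (1 - x) ^ (β - 1) = beta α β := by
  set F : ℝ → ℝ := fun x => 1 / beta α β * x ^ (α - 1) * (1 - x) ^ (β - 1)
  have hB := beta_pos hα hβ
  have hF_meas : AEStronglyMeasurable F (volume.restrict (Ioo 0 1)) := by fun_prop
  have hF_nonneg : 0 ≤ᵐ[volume.restrict (Ioo 0 1)] F :=
    ae_restrict_of_forall_mem measurableSet_Ioo fun x hx => by
      have := hx.1; have : 0 < 1 - x := by linarith [hx.2]
      positivity
  have hF_lint : ∫⁻ x in Ioo 0 1, ENNReal.ofReal (F x) = 1 := by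
    rw [← lintegral_betaPDF, lintegral_betaPDF_eq_one hα hβ]
  have hF_int : IntegrableOn F (Ioo 0 1) :=
    (lintegral_ofReal_ne_top_iff_integrable hF_meas hF_nonneg).1 (by simp [hF_lint])
  have hF_eq : ∫ x in Ioo 0 1, F x = 1 := by
    simp [integral_eq_lintegral_of_nonneg_ae hF_nonneg hF_meas, hF_lint]
  have hF_scale :
      (fun x : ℝ => x ^ (α - 1) * (1 - x) ^ (β - 1)) = fun x => beta α β * F x := by
    ext x; simp only [F]; field_simp
  rw [hF_scale, integral_const_mul, hF_eq, mul_one]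
  exact ⟨hF_int.const_mul _, rfl⟩

theorem image_sq_sub_div_Ioo {a b : ℝ} (ha : 0 ≤ a) (hab : a < b) :
    (fun s => (s ^ 2 - a ^ 2) / (b ^ 2 - a ^ 2)) '' Ioo a b = Ioo 0 1 := by
  have hD : 0 < b ^ 2 - a ^ 2 := by nlinarith
  ext x
  simp only [mem_image, mem_Ioo]
  constructor
  · rintro ⟨s, ⟨has, hsb⟩, rfl⟩
    rw [lt_div_iff₀ hD, div_lt_one hD]
    constructor <;> nlinarith
  · rintro ⟨hx0, hx1⟩
    have hv : 0 ≤ a ^ 2 + (b ^ 2 - a ^ 2) * x := by positivity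
    refine ⟨√(a ^ 2 + (b ^ 2 - a ^ 2) * x), ⟨?_, ?_⟩, ?_⟩
    · rw [lt_sqrt ha]; nlinarith
    · rw [sqrt_lt' (by linarith)]; nlinarith
    · rw [sq_sqrt hv]; field_simp; ring

theorem integrableOn_and_integral_mul_sq_sub_rpow_mul_sq_sub_rpow {a b α β : ℝ} (ha : 0 ≤ a)
    (hab : a < b) (hα : 0 < α) (hβ : 0 < β) :
    IntegrableOn (fun s => s * (s ^ 2 - a ^ 2) ^ (α - 1) * (b ^ 2 - s ^ 2) ^ (β - 1))
      (Ioo a b) ∧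
      ∫ s in Ioo a b, s * (s ^ 2 - a ^ 2) ^ (α - 1) * (b ^ 2 - s ^ 2) ^ (β - 1) =
        beta α β / 2 * (b ^ 2 - a ^ 2) ^ (α + β - 1) := by
  set D := b ^ 2 - a ^ 2
  have hD : 0 < D := by nlinarith
  have hderiv : ∀ s ∈ Ioo a b, HasDerivWithinAt (fun s => (s ^ 2 - a ^ 2) / D)
      (2 * s / D) (Ioo a b) s := fun s _ => by
    simpa using (((hasDerivAt_pow 2 s).sub_const (a ^ 2)).div_const D).hasDerivWithinAt
  have hinj : InjOn (fun s => (s ^ 2 - a ^ 2) / D) (Ioo a b) := fun s hs s' hs' h => by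
    have : s ^ 2 = s' ^ 2 := by simpa [hD.ne'] using h
    exact (sq_eq_sq₀ (ha.trans hs.1.le) (ha.trans hs'.1.le)).1 this
  have hjac : EqOn (fun s => |2 * s / D| • (((s ^ 2 - a ^ 2) / D) ^ (α - 1) *
        (1 - (s ^ 2 - a ^ 2) / D) ^ (β - 1)))
      (fun s => 2 / D ^ (α + β - 1) *
        (s * (s ^ 2 - a ^ 2) ^ (α - 1) * (b ^ 2 - s ^ 2) ^ (β - 1))) (Ioo a b) := by
    intro s ⟨has, hsb⟩
    have hs : 0 < s := ha.trans_lt has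
    have hpow : D ^ (α + β - 1) = D * D ^ (α - 1) * D ^ (β - 1) := by
      rw [← rpow_one_add' hD.le (by linarith), ← rpow_add hD]; ring_nf
    dsimp only
    rw [show 1 - (s ^ 2 - a ^ 2) / D = (b ^ 2 - s ^ 2) / D by field_simp; ring,
      div_rpow (by nlinarith) hD.le, div_rpow (by nlinarith) hD.le, abs_of_pos (by positivity),
      hpow, smul_eq_mul]
    field_simp
  have hc : (2 / D ^ (α + β - 1)) ≠ 0 := by positivity
  obtain ⟨hint, hval⟩ := integrableOn_and_integral_rpow_mul_one_sub_rpow hα hβ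
  rw [← image_sq_sub_div_Ioo ha hab] at hint hval
  rw [integrableOn_image_iff_integrableOn_abs_deriv_smul measurableSet_Ioo hderiv hinj,
    integrableOn_congr_fun hjac measurableSet_Ioo, IntegrableOn,
    integrable_const_mul_iff hc.isUnit] at hint
  rw [integral_image_eq_integral_abs_deriv_smul measurableSet_Ioo hderiv hinj,
    setIntegral_congr_fun measurableSet_Ioo hjac, integral_const_mul] at hval
  refine ⟨hint, ?_⟩
  rw [← hval]
  field_simp

theorem integral_integral_mul_kernel {X Y : Type*} [MeasurableSpace X] [MeasurableSpace Y]
    {μ : Measure X} {ν : Measure Y} [SFinite μ] [SFinite ν] {g w : Y → ℝ}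
    {k : X → Y → ℝ}
    (hg : AEStronglyMeasurable g ν) (hk : AEStronglyMeasurable (Function.uncurry k) (μ.prod ν))
    (hk_nonneg : ∀ᵐ y ∂ν, 0 ≤ᵐ[μ] fun x => k x y)
    (hk_int : ∀ᵐ y ∂ν, Integrable (fun x => k x y) μ)
    (hkw : ∀ᵐ y ∂ν, ∫ x, k x y ∂μ = w y)
    (hgw : Integrable (fun y => g y * w y) ν) :
    ∫ x, ∫ y, g y * k x y ∂ν ∂μ = ∫ y, g y * w y ∂ν := by
  have hF : Integrable (Function.uncurry fun x y => g y * k x y) (μ.prod ν) := by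
    refine (integrable_prod_iff' (hg.comp_snd.mul hk)).2 ⟨?_, hgw.norm.congr ?_⟩
    · filter_upwards [hk_int] with y hy using hy.const_mul (g y)
    · filter_upwards [hk_nonneg, hkw] with y h0 hw
      have hw0 : 0 ≤ w y := hw ▸ integral_nonneg_of_ae h0
      simp only [Pi.mul_apply, Function.uncurry_apply_pair, norm_mul, Real.norm_eq_abs,
        abs_of_nonneg hw0]
      rw [integral_const_mul, integral_congr_ae (h0.mono fun x hx => abs_of_nonneg hx), hw]
  rw [integral_integral_swap hF]
  refine integral_congr_ae ?_
  filter_upwards [hkw] with y hw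
  rw [integral_const_mul, hw]

theorem beta_comm (α β : ℝ) : beta β α = beta α β := by
  rw [beta, beta, mul_comm, add_comm]

theorem Gamma_inv_mul_Gamma_inv_mul_beta {α β : ℝ} (hα : 0 < α) (hβ : 0 < β) :
    (Gamma α)⁻¹ * (Gamma β)⁻¹ * beta α β = (Gamma (α + β))⁻¹ := by
  have := Gamma_pos_of_pos hα; have := Gamma_pos_of_pos hβ
  rw [beta]; field_simp

section EKplus

variable {α β t : ℝ}

noncomputable def ekPlusKernel (α β t s u : ℝ) : ℝ :=
  if u ≤ s then s * (s ^ 2 - u ^ 2) ^ (β - 1) * (t ^ 2 - s ^ 2) ^ (α - 1) else 0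

theorem measurable_uncurry_ekPlusKernel : Measurable (Function.uncurry (ekPlusKernel α β t)) := by
  refine Measurable.ite ?_ (by fun_prop) measurable_const
  exact measurableSet_le measurable_snd measurable_fst

theorem EKplus_EKplus_eq_integral_ekPlusKernel (f : ℝ → ℝ) (t : ℝ) :
    EKplus α (EKplus β f) t = 2 * (Gamma α)⁻¹ * (2 * (Gamma β)⁻¹ *
      ∫ s in Ioc 0 t, ∫ u in Ioc 0 t, f u * u * ekPlusKernel α β t s u) := by
  rw [EKplus]
  congr 1
  rw [← integral_const_mul]
  refine setIntegral_congr_fun measurableSet_Ioc fun s hs => ?_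
  have hind : ∀ u, f u * u * ekPlusKernel α β t s u = (Iic s).indicator
      (fun u => f u * u * (s ^ 2 - u ^ 2) ^ (β - 1) * (s * (t ^ 2 - s ^ 2) ^ (α - 1))) u := by
    intro u
    simp only [ekPlusKernel, indicator_apply, mem_Iic]
    split_ifs <;> ring
  simp_rw [hind]
  rw [setIntegral_indicator measurableSet_Iic, Ioc_inter_Iic, min_eq_right hs.2,
    integral_mul_const, EKplus]
  ring

theorem integrableOn_and_integral_ekPlusKernel (hα : 0 < α) (hβ : 0 < β) {u : ℝ}
    (hu : u ∈ Ioo 0 t) :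
    IntegrableOn (fun s => ekPlusKernel α β t s u) (Ioc 0 t) ∧
      ∫ s in Ioc 0 t, ekPlusKernel α β t s u =
        beta α β / 2 * (t ^ 2 - u ^ 2) ^ (α + β - 1) := by
  have hind : (fun s => ekPlusKernel α β t s u) = (Ici u).indicator
      (fun s => s * (s ^ 2 - u ^ 2) ^ (β - 1) * (t ^ 2 - s ^ 2) ^ (α - 1)) := by
    ext s
    simp only [ekPlusKernel, indicator_apply, mem_Ici]
  have hset : Ioc 0 t ∩ Ici u = Icc u t := by
    ext s; simp only [mem_inter_iff, mem_Ioc, mem_Ici, mem_Icc]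
    constructor
    · rintro ⟨⟨-, hst⟩, hus⟩; exact ⟨hus, hst⟩
    · rintro ⟨hus, hst⟩; exact ⟨⟨hu.1.trans_le hus, hst⟩, hus⟩
  obtain ⟨hint, hval⟩ :=
    integrableOn_and_integral_mul_sq_sub_rpow_mul_sq_sub_rpow hu.1.le hu.2 hβ hα
  rw [hind, integrableOn_indicator_iff measurableSet_Ici, setIntegral_indicator measurableSet_Ici,
    inter_comm (Ici u), hset, integral_Icc_eq_integral_Ioo,
    integrableOn_Icc_iff_integrableOn_Ioo, hval, beta_comm, add_comm β α]
  exact ⟨hint, rfl⟩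

theorem ekPlusKernel_nonneg {s u : ℝ} (hu : 0 ≤ u) (hs : s ∈ Ioc 0 t) :
    0 ≤ ekPlusKernel α β t s u := by
  unfold ekPlusKernel
  split_ifs with hus
  · have : 0 ≤ s ^ 2 - u ^ 2 := by nlinarith
    have : 0 ≤ t ^ 2 - s ^ 2 := by nlinarith [hs.1, hs.2]
    have := hs.1
    positivity
  · exact le_rfl

theorem integrableOn_Ioc_of_lintegral_abs_mul_lt_top {f : ℝ → ℝ} (hf : Measurable f) {γ : ℝ}
    (hfin :
      ∫⁻ s in Ioc 0 t, ENNReal.ofReal (|f s| * s * (t ^ 2 - s ^ 2) ^ γ) < ⊤) :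
    IntegrableOn (fun s => f s * s * (t ^ 2 - s ^ 2) ^ γ) (Ioc 0 t) := by
  refine ⟨by fun_prop, (hasFiniteIntegral_iff_norm _).2 (lt_of_eq_of_lt
    (setLIntegral_congr_fun measurableSet_Ioc fun s ⟨hs, hst⟩ => ?_) hfin)⟩
  have : 0 ≤ t ^ 2 - s ^ 2 := by nlinarith
  rw [norm_mul, norm_mul, Real.norm_eq_abs, norm_of_nonneg hs.le, norm_of_nonneg (by positivity)]

theorem EKplus_EKplus_apply (hα : 0 < α) (hβ : 0 < β) {f : ℝ → ℝ} (hf : Measurable f)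
    (hint : IntegrableOn (fun s => f s * s * (t ^ 2 - s ^ 2) ^ (α + β - 1)) (Ioc 0 t)) :
    EKplus α (EKplus β f) t = EKplus (α + β) f t := by
  have hker : ∀ᵐ u ∂volume.restrict (Ioc (0 : ℝ) t),
      IntegrableOn (fun s => ekPlusKernel α β t s u) (Ioc 0 t) ∧
      ∫ s in Ioc 0 t, ekPlusKernel α β t s u =
        beta α β / 2 * (t ^ 2 - u ^ 2) ^ (α + β - 1) := by
    refine ae_restrict_of_ae_eq_of_ae_restrict Ioo_ae_eq_Ioc ?_
    exact ae_restrict_of_forall_mem measurableSet_Ioo fun u hu =>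
      integrableOn_and_integral_ekPlusKernel hα hβ hu
  have hnonneg : ∀ᵐ u ∂volume.restrict (Ioc 0 t),
      0 ≤ᵐ[volume.restrict (Ioc 0 t)] fun s => ekPlusKernel α β t s u := by
    refine ae_restrict_of_ae_eq_of_ae_restrict Ioo_ae_eq_Ioc ?_
    exact ae_restrict_of_forall_mem measurableSet_Ioo fun u hu =>
      ae_restrict_of_forall_mem measurableSet_Ioc fun s hs => ekPlusKernel_nonneg hu.1.le hs
  rw [EKplus_EKplus_eq_integral_ekPlusKernel, integral_integral_mul_kernel (by fun_prop)
    measurable_uncurry_ekPlusKernel.aestronglyMeasurable hnonneg (hker.mono fun _ h => h.1)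
    (hker.mono fun _ h => h.2) ?_]
  · simp_rw [mul_left_comm _ (beta α β / 2), integral_const_mul, EKplus]
    linear_combination (2 * ∫ u in Ioc 0 t, f u * u * (t ^ 2 - u ^ 2) ^ (α + β - 1)) *
      Gamma_inv_mul_Gamma_inv_mul_beta hα hβ
  · exact (hint.const_mul (beta α β / 2)).congr (ae_of_all _ fun u => by ring)

end EKplus

section EKminus

variable {α β t : ℝ}

noncomputable def ekMinusKernel (α β t s u : ℝ) : ℝ :=
  if s < u then s * (s ^ 2 - t ^ 2) ^ (α - 1) * (u ^ 2 - s ^ 2) ^ (β - 1) else 0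

theorem measurable_uncurry_ekMinusKernel :
    Measurable (Function.uncurry (ekMinusKernel α β t)) := by
  refine Measurable.ite ?_ (by fun_prop) measurable_const
  exact measurableSet_lt measurable_fst measurable_snd

theorem EKminus_EKminus_eq_integral_ekMinusKernel (f : ℝ → ℝ) (t : ℝ) :
    EKminus α (EKminus β f) t = 2 * (Gamma α)⁻¹ * (2 * (Gamma β)⁻¹ *
      ∫ s in Ioi t, ∫ u in Ioi t, f u * u * ekMinusKernel α β t s u) := by
  rw [EKminus]
  congr 1
  rw [← integral_const_mul]
  refine setIntegral_congr_fun measurableSet_Ioi fun s hs => ?_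
  have hind : ∀ u, f u * u * ekMinusKernel α β t s u = (Ioi s).indicator
      (fun u => f u * u * (u ^ 2 - s ^ 2) ^ (β - 1) * (s * (s ^ 2 - t ^ 2) ^ (α - 1))) u := by
    intro u
    simp only [ekMinusKernel, indicator_apply, mem_Ioi]
    split_ifs <;> ring
  simp_rw [hind]
  rw [setIntegral_indicator measurableSet_Ioi, Ioi_inter_Ioi, sup_eq_right.2 (le_of_lt hs),
    integral_mul_const, EKminus]
  ring

theorem integrableOn_and_integral_ekMinusKernel (hα : 0 < α) (hβ : 0 < β) (ht : 0 ≤ t)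
    {u : ℝ} (hu : t < u) :
    IntegrableOn (fun s => ekMinusKernel α β t s u) (Ioi t) ∧
      ∫ s in Ioi t, ekMinusKernel α β t s u =
        beta α β / 2 * (u ^ 2 - t ^ 2) ^ (α + β - 1) := by
  have hind : (fun s => ekMinusKernel α β t s u) = (Iio u).indicator
      (fun s => s * (s ^ 2 - t ^ 2) ^ (α - 1) * (u ^ 2 - s ^ 2) ^ (β - 1)) := by
    ext s
    simp only [ekMinusKernel, indicator_apply, mem_Iio]
  rw [hind, integrableOn_indicator_iff measurableSet_Iio, setIntegral_indicator measurableSet_Iio,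
    inter_comm (Iio u), Ioi_inter_Iio]
  exact integrableOn_and_integral_mul_sq_sub_rpow_mul_sq_sub_rpow ht hu hα hβ

theorem ekMinusKernel_nonneg (ht : 0 ≤ t) {s u : ℝ} (hs : t < s) :
    0 ≤ ekMinusKernel α β t s u := by
  unfold ekMinusKernel
  split_ifs with hsu
  · have : 0 ≤ s ^ 2 - t ^ 2 := by nlinarith
    have : 0 ≤ u ^ 2 - s ^ 2 := by nlinarith
    have : 0 ≤ s := ht.trans hs.le
    positivity
  · exact le_rfl

theorem integrableOn_Ioi_of_lintegral_abs_mul_lt_top (ht : 0 ≤ t) {f : ℝ → ℝ}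
    (hf : Measurable f) {γ : ℝ}
    (hfin : ∫⁻ s in Ioi t, ENNReal.ofReal (|f s| * s * (s ^ 2 - t ^ 2) ^ γ) < ⊤) :
    IntegrableOn (fun s => f s * s * (s ^ 2 - t ^ 2) ^ γ) (Ioi t) := by
  refine ⟨by fun_prop, (hasFiniteIntegral_iff_norm _).2 (lt_of_eq_of_lt
    (setLIntegral_congr_fun measurableSet_Ioi fun s (hs : t < s) => ?_) hfin)⟩
  have : 0 ≤ s ^ 2 - t ^ 2 := by nlinarith
  rw [norm_mul, norm_mul, Real.norm_eq_abs, norm_of_nonneg (ht.trans hs.le),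
    norm_of_nonneg (by positivity)]

theorem EKminus_EKminus_apply (hα : 0 < α) (hβ : 0 < β) (ht : 0 ≤ t) {f : ℝ → ℝ}
    (hf : Measurable f)
    (hint : IntegrableOn (fun s => f s * s * (s ^ 2 - t ^ 2) ^ (α + β - 1)) (Ioi t)) :
    EKminus α (EKminus β f) t = EKminus (α + β) f t := by
  have hker : ∀ᵐ u ∂volume.restrict (Ioi t),
      IntegrableOn (fun s => ekMinusKernel α β t s u) (Ioi t) ∧
      ∫ s in Ioi t, ekMinusKernel α β t s u =
        beta α β / 2 * (u ^ 2 - t ^ 2) ^ (α + β - 1) :=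
    ae_restrict_of_forall_mem measurableSet_Ioi fun u hu =>
      integrableOn_and_integral_ekMinusKernel hα hβ ht hu
  have hnonneg : ∀ᵐ u ∂volume.restrict (Ioi t),
      0 ≤ᵐ[volume.restrict (Ioi t)] fun s => ekMinusKernel α β t s u :=
    ae_of_all _ fun _ =>
      ae_restrict_of_forall_mem measurableSet_Ioi fun _ hs => ekMinusKernel_nonneg ht hs
  rw [EKminus_EKminus_eq_integral_ekMinusKernel, integral_integral_mul_kernel (by fun_prop)
    measurable_uncurry_ekMinusKernel.aestronglyMeasurable hnonneg (hker.mono fun _ h => h.1)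
    (hker.mono fun _ h => h.2) ?_]
  · simp_rw [mul_left_comm _ (beta α β / 2), integral_const_mul, EKminus]
    linear_combination (2 * ∫ u in Ioi t, f u * u * (u ^ 2 - t ^ 2) ^ (α + β - 1)) *
      Gamma_inv_mul_Gamma_inv_mul_beta hα hβ
  · exact (hint.const_mul (beta α β / 2)).congr (ae_of_all _ fun u => by ring)

end EKminus

/-- Semigroup property `I^α_{±,2} (I^β_{±,2} f) = I^{α+β}_{±,2} f` a.e. on `(0,∞)`,
provided all integrals converge absolutely. -/
theorem ek_semigroup (α β : ℝ) (hα : 0 < α) (hβ : 0 < β) (f : ℝ → ℝ)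
    (hmeas : Measurable f)
    (habsPlus : ∀ t > (0 : ℝ),
      ∫⁻ s in Ioc (0 : ℝ) t, ENNReal.ofReal (|f s| * s * (t ^ 2 - s ^ 2) ^ (α + β - 1)) < ⊤)
    (habsMinus : ∀ t > (0 : ℝ),
      ∫⁻ s in Ioi t, ENNReal.ofReal (|f s| * s * (s ^ 2 - t ^ 2) ^ (α + β - 1)) < ⊤) :
    (∀ᵐ t ∂(volume.restrict (Ioi (0 : ℝ))),
      EKplus α (EKplus β f) t = EKplus (α + β) f t) ∧
    (∀ᵐ t ∂(volume.restrict (Ioi (0 : ℝ))),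
      EKminus α (EKminus β f) t = EKminus (α + β) f t) := by
  refine ⟨ae_restrict_of_forall_mem measurableSet_Ioi fun t (ht : 0 < t) => ?_,
    ae_restrict_of_forall_mem measurableSet_Ioi fun t (ht : 0 < t) => ?_⟩
  · exact EKplus_EKplus_apply hα hβ hmeas
      (integrableOn_Ioc_of_lintegral_abs_mul_lt_top hmeas (habsPlus t ht))
  · exact EKminus_EKminus_apply hα hβ ht.le hmeas
      (integrableOn_Ioi_of_lintegral_abs_mul_lt_top ht.le hmeas (habsMinus t ht))
end

section
/- For α > 0, s > t > 0, the kernel integral I(s,t) = s·t · ∫_t^s (s²-r²)^{α-1} (r²-t²)^{α-1} r^{-2α} dr equals 2^{2α-2} Γ(α)² (s-t)^{2α-1} / Γ(2α). -/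
/-!
Substituting `w = r - s t / r` maps `(t, s)` monotonically onto `(-(s - t), s - t)`, with
`dw = (1 + s t / r²) dr` and `(s - t)² - w² = (s² - r²)(r² - t²) / r²`. The inversion
`r ↦ s t / r` preserves `(t, s)` and negates `w`, so for the even integrand
`g w = ((s - t)² - w²)^(α-1)` the two parts `∫ g(w(r)) dr` and `∫ (s t / r²) g(w(r)) dr` of
`∫ g` are equal. Hence the kernel integral is half of `∫_{-(s-t)}^{s-t} ((s-t)² - w²)^(α-1) dw`,
a beta integral equal to `(2(s - t))^(2α-1) Γ(α)² / Γ(2α)`.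
-/

open MeasureTheory Real Set

theorem integral_Ioo_rpow_mul_one_sub_rpow_s8 {a b : ℝ} (ha : 0 < a) (hb : 0 < b) :
    ∫ v in Ioo (0 : ℝ) 1, v ^ (a - 1) * (1 - v) ^ (b - 1) = Gamma a * Gamma b / Gamma (a + b) := by
  have hB := Complex.betaIntegral_eq_Gamma_mul_div a b (by simpa) (by simpa)
  rw [Complex.betaIntegral, intervalIntegral.integral_of_le zero_le_one,
    integral_Ioc_eq_integral_Ioo, ← Complex.ofReal_add, Complex.Gamma_ofReal,
    Complex.Gamma_ofReal, Complex.Gamma_ofReal] at hB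
  refine Complex.ofReal_injective (integral_complex_ofReal.symm.trans ?_)
  rw [Complex.ofReal_div, Complex.ofReal_mul, ← hB]
  refine setIntegral_congr_fun measurableSet_Ioo fun v hv => ?_
  rw [Complex.ofReal_mul, Complex.ofReal_cpow hv.1.le, Complex.ofReal_cpow (sub_nonneg.2 hv.2.le)]
  push_cast
  rfl

theorem integral_Ioo_sub_rpow_mul_sub_rpow {a b p q : ℝ} (ha : 0 < a) (hb : 0 < b) (hpq : p < q) :
    ∫ w in Ioo p q, (w - p) ^ (a - 1) * (q - w) ^ (b - 1)
      = (q - p) ^ (a + b - 1) * (Gamma a * Gamma b / Gamma (a + b)) := by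
  have hl : 0 < q - p := sub_pos.2 hpq
  have hsub := intervalIntegral.integral_comp_add_mul
    (fun w => (w - p) ^ (a - 1) * (q - w) ^ (b - 1)) (a := 0) (b := 1) hl.ne' p
  simp only [mul_zero, add_zero, mul_one, add_sub_cancel, smul_eq_mul] at hsub
  rw [eq_inv_mul_iff_mul_eq₀ hl.ne'] at hsub
  have hpow : (q - p) ^ (a + b - 1) = (q - p) * ((q - p) ^ (a - 1) * (q - p) ^ (b - 1)) := by
    rw [show a + b - 1 = 1 + ((a - 1) + (b - 1)) by ring, rpow_add hl, rpow_add hl, rpow_one]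
  rw [← integral_Ioo_rpow_mul_one_sub_rpow_s8 ha hb, ← integral_Ioc_eq_integral_Ioo,
    ← integral_Ioc_eq_integral_Ioo, ← intervalIntegral.integral_of_le hpq.le,
    ← intervalIntegral.integral_of_le zero_le_one, hpow, ← hsub, mul_assoc]
  congr 1
  rw [← intervalIntegral.integral_const_mul]
  refine intervalIntegral.integral_congr fun v hv => ?_
  rw [uIcc_of_le zero_le_one] at hv
  rw [show p + (q - p) * v - p = (q - p) * v by ring,
    show q - (p + (q - p) * v) = (q - p) * (1 - v) by ring,
    mul_rpow hl.le hv.1, mul_rpow hl.le (sub_nonneg.2 hv.2)]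
  ring

theorem integral_Ioo_sq_sub_sq_rpow {c α : ℝ} (hc : 0 < c) (hα : 0 < α) :
    ∫ w in Ioo (-c) c, (c ^ 2 - w ^ 2) ^ (α - 1)
      = (2 * c) ^ (2 * α - 1) * (Gamma α ^ 2 / Gamma (2 * α)) := by
  have h := integral_Ioo_sub_rpow_mul_sub_rpow hα hα (neg_lt_self hc)
  rw [sub_neg_eq_add, ← two_mul, ← two_mul, ← sq] at h
  rw [← h]
  refine setIntegral_congr_fun measurableSet_Ioo fun w hw => ?_
  rw [← mul_rpow (by linarith [hw.1]) (by linarith [hw.2])]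
  ring_nf

theorem integrableOn_Ioo_sq_sub_sq_rpow {c α : ℝ} (hc : 0 < c) (hα : 0 < α) :
    IntegrableOn (fun w => (c ^ 2 - w ^ 2) ^ (α - 1)) (Ioo (-c) c) :=
  Integrable.of_integral_ne_zero <| by
    rw [integral_Ioo_sq_sub_sq_rpow hc hα]
    have := Gamma_pos_of_pos hα
    have := Gamma_pos_of_pos (mul_pos two_pos hα)
    positivity

section Substitutions

variable {E : Type*} [NormedAddCommGroup E] [NormedSpace ℝ E] {k r s t : ℝ}

theorem hasDerivAt_const_div (k : ℝ) (hr : r ≠ 0) :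
    HasDerivAt (fun x => k / x) (-(k / r ^ 2)) r :=
  ((hasDerivAt_const r k).div (hasDerivAt_id r) hr).congr_deriv (by simp; ring)

theorem hasDerivAt_sub_const_div (k : ℝ) (hr : r ≠ 0) :
    HasDerivAt (fun x => x - k / x) (1 + k / r ^ 2) r :=
  ((hasDerivAt_id r).sub (hasDerivAt_const_div k hr)).congr_deriv (sub_neg_eq_add _ _)

theorem strictAntiOn_const_div (hk : 0 < k) : StrictAntiOn (fun x => k / x) (Ioi 0) :=
  fun _ hx _ _ hxy => div_lt_div_of_pos_left hk hx hxy

theorem strictMonoOn_sub_const_div (hk : 0 ≤ k) : StrictMonoOn (fun x => x - k / x) (Ioi 0) :=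
  fun x hx _ _ hxy => by
    have := div_le_div_of_nonneg_left hk hx hxy.le
    dsimp only
    linarith

theorem continuousOn_const_div_Icc (ht : 0 < t) : ContinuousOn (fun x => k / x) (Icc t s) :=
  continuousOn_const.div continuousOn_id fun _ hx => (ht.trans_le hx.1).ne'

theorem image_mul_div_Ioo (ht : 0 < t) (hts : t ≤ s) :
    (fun r => s * t / r) '' Ioo t s = Ioo t s := by
  have hs : 0 < s := ht.trans_le hts
  rw [(continuousOn_const_div_Icc ht).image_Ioo_of_strictAntiOn hts
      ((strictAntiOn_const_div (mul_pos hs ht)).mono fun _ hx => ht.trans_le hx.1),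
    mul_div_cancel_left₀ _ hs.ne', mul_div_cancel_right₀ _ ht.ne']

theorem image_sub_mul_div_Ioo (ht : 0 < t) (hts : t ≤ s) :
    (fun r => r - s * t / r) '' Ioo t s = Ioo (t - s) (s - t) := by
  have hs : 0 < s := ht.trans_le hts
  have hcont : ContinuousOn (fun x => x - s * t / x) (Icc t s) :=
    continuousOn_id.sub (continuousOn_const_div_Icc ht)
  rw [hcont.image_Ioo_of_strictMonoOn hts
      ((strictMonoOn_sub_const_div (mul_pos hs ht).le).mono fun _ hx => ht.trans_le hx.1),
    mul_div_cancel_left₀ _ hs.ne', mul_div_cancel_right₀ _ ht.ne']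

theorem integral_Ioo_comp_mul_div (ht : 0 < t) (hts : t ≤ s) (h : ℝ → E) :
    ∫ r in Ioo t s, h r = ∫ r in Ioo t s, (s * t / r ^ 2) • h (s * t / r) := by
  conv_lhs => rw [← image_mul_div_Ioo ht hts]
  rw [integral_image_eq_integral_deriv_smul_of_antitoneOn measurableSet_Ioo
    (fun r hr => (hasDerivAt_const_div _ (ht.trans hr.1).ne').hasDerivWithinAt)
    ((strictAntiOn_const_div (mul_pos (ht.trans_le hts) ht)).antitoneOn.mono
      fun _ hx => ht.trans hx.1)]
  simp only [neg_neg]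

theorem integrableOn_Ioo_comp_sub_mul_div_iff (ht : 0 < t) (hts : t ≤ s) (g : ℝ → E) :
    IntegrableOn g (Ioo (t - s) (s - t)) ↔
      IntegrableOn (fun r => (1 + s * t / r ^ 2) • g (r - s * t / r)) (Ioo t s) := by
  rw [← image_sub_mul_div_Ioo ht hts]
  exact integrableOn_image_iff_integrableOn_deriv_smul_of_monotoneOn measurableSet_Ioo
    (fun r hr => (hasDerivAt_sub_const_div _ (ht.trans hr.1).ne').hasDerivWithinAt)
    ((strictMonoOn_sub_const_div (mul_pos (ht.trans_le hts) ht).le).monotoneOn.mono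
      fun _ hx => ht.trans hx.1) g

theorem integral_Ioo_comp_sub_mul_div (ht : 0 < t) (hts : t ≤ s) (g : ℝ → E) :
    ∫ w in Ioo (t - s) (s - t), g w = ∫ r in Ioo t s, (1 + s * t / r ^ 2) • g (r - s * t / r) := by
  rw [← image_sub_mul_div_Ioo ht hts]
  exact integral_image_eq_integral_deriv_smul_of_monotoneOn measurableSet_Ioo
    (fun r hr => (hasDerivAt_sub_const_div _ (ht.trans hr.1).ne').hasDerivWithinAt)
    ((strictMonoOn_sub_const_div (mul_pos (ht.trans_le hts) ht).le).monotoneOn.mono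
      fun _ hx => ht.trans hx.1) g

theorem Function.Even.integral_Ioo_eq_two_smul_integral_comp_sub_mul_div (ht : 0 < t)
    (hts : t ≤ s) {g : ℝ → E} (hg : g.Even) (hgi : IntegrableOn g (Ioo (t - s) (s - t))) :
    ∫ w in Ioo (t - s) (s - t), g w
      = (2 : ℝ) • ∫ r in Ioo t s, (s * t / r ^ 2) • g (r - s * t / r) := by
  set G : ℝ → E := fun r => g (r - s * t / r)
  have hst : s * t ≠ 0 := (mul_pos (ht.trans_le hts) ht).ne'
  have hk : ∀ r ∈ Ioo t s, 0 < s * t / r ^ 2 := fun r hr => by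
    have := ht.trans_le hts
    have := ht.trans hr.1
    positivity
  have hJG : IntegrableOn (fun r => (1 + s * t / r ^ 2) • G r) (Ioo t s) :=
    (integrableOn_Ioo_comp_sub_mul_div_iff ht hts g).1 hgi
  have hG : IntegrableOn G (Ioo t s) := by
    refine IntegrableOn.congr_fun (hJG.bdd_smul 1 (φ := fun r => (1 + s * t / r ^ 2)⁻¹)
      (by fun_prop : Measurable fun r : ℝ => (1 + s * t / r ^ 2)⁻¹).aestronglyMeasurable
      (ae_restrict_of_forall_mem measurableSet_Ioo fun r hr => ?_)) (fun r hr => ?_)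
      measurableSet_Ioo
    · rw [norm_inv, Real.norm_of_nonneg (by linarith [hk r hr])]
      exact inv_le_one_of_one_le₀ (by linarith [hk r hr])
    · rw [Pi.smul_apply', smul_smul, inv_mul_cancel₀ (by linarith [hk r hr]), one_smul]
  have hkG : IntegrableOn (fun r => (s * t / r ^ 2) • G r) (Ioo t s) :=
    (hJG.sub hG).congr_fun (fun r _ => by simp only [Pi.sub_apply, add_smul, one_smul,
      add_sub_cancel_left]) measurableSet_Ioo
  have hinv : ∫ r in Ioo t s, G r = ∫ r in Ioo t s, (s * t / r ^ 2) • G r := by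
    rw [integral_Ioo_comp_mul_div ht hts G]
    refine setIntegral_congr_fun measurableSet_Ioo fun r _ => ?_
    simp only [G, div_div_cancel₀ hst, ← neg_sub r, hg (r - s * t / r)]
  calc ∫ w in Ioo (t - s) (s - t), g w
      = ∫ r in Ioo t s, (1 + s * t / r ^ 2) • G r := integral_Ioo_comp_sub_mul_div ht hts g
    _ = (∫ r in Ioo t s, G r) + ∫ r in Ioo t s, (s * t / r ^ 2) • G r := by
      rw [← integral_add hG hkG]
      exact setIntegral_congr_fun measurableSet_Ioo fun r _ => by rw [add_smul, one_smul]
    _ = (2 : ℝ) • ∫ r in Ioo t s, (s * t / r ^ 2) • G r := by rw [hinv, two_smul]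

theorem sq_sub_sq_sub_mul_div (hr : r ≠ 0) :
    (s - t) ^ 2 - (r - s * t / r) ^ 2 = (s ^ 2 - r ^ 2) * (r ^ 2 - t ^ 2) / r ^ 2 := by
  field_simp
  ring

theorem mul_div_sq_mul_rpow_sq_sub_sq_sub_mul_div (α : ℝ) (ht : 0 ≤ t) (hr : r ∈ Ioo t s) :
    s * t / r ^ 2 * ((s - t) ^ 2 - (r - s * t / r) ^ 2) ^ (α - 1)
      = s * t * ((s ^ 2 - r ^ 2) ^ (α - 1) * (r ^ 2 - t ^ 2) ^ (α - 1) * r ^ (-(2 * α))) := by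
  have hr0 : 0 < r := ht.trans_lt hr.1
  have hsr : 0 ≤ s ^ 2 - r ^ 2 := by nlinarith [hr.2]
  have hrt : 0 ≤ r ^ 2 - t ^ 2 := by nlinarith [hr.1]
  have hpow : r ^ (-(2 * α)) = ((r ^ 2) ^ (α - 1) * r ^ 2)⁻¹ := by
    rw [rpow_neg hr0.le, ← rpow_two, ← rpow_mul hr0.le, ← rpow_add hr0]
    ring_nf
  rw [sq_sub_sq_sub_mul_div hr0.ne', div_rpow (mul_nonneg hsr hrt) (by positivity),
    mul_rpow hsr hrt, hpow]
  have : 0 < (r ^ 2) ^ (α - 1) := by positivity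
  field_simp

end Substitutions

/-- For `α > 0` and `s > t > 0`, the kernel integral
`I(s,t) = s t ∫_t^s (s²-r²)^{α-1} (r²-t²)^{α-1} r^{-2α} dr`
equals `2^{2α-2} Γ(α)² (s-t)^{2α-1} / Γ(2α)`. -/
theorem kernel_integral_eval (α s t : ℝ) (hα : 0 < α) (ht : 0 < t) (hts : t < s) :
    s * t * ∫ r in Ioo t s, (s ^ 2 - r ^ 2) ^ (α - 1) * (r ^ 2 - t ^ 2) ^ (α - 1)
        * r ^ (-(2 * α))
      = 2 ^ (2 * α - 2) * (Real.Gamma α) ^ 2 * (s - t) ^ (2 * α - 1)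
          / Real.Gamma (2 * α) := by
  have hc : 0 < s - t := sub_pos.2 hts
  set g : ℝ → ℝ := fun w => ((s - t) ^ 2 - w ^ 2) ^ (α - 1)
  have hg : g.Even := fun w => by simp only [g, neg_sq]
  have hgI : ∫ w in Ioo (t - s) (s - t), g w
      = (2 * (s - t)) ^ (2 * α - 1) * (Gamma α ^ 2 / Gamma (2 * α)) := by
    rw [← neg_sub s t]
    exact integral_Ioo_sq_sub_sq_rpow hc hα
  have hgi : IntegrableOn g (Ioo (t - s) (s - t)) := by
    rw [← neg_sub s t]
    exact integrableOn_Ioo_sq_sub_sq_rpow hc hα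
  have htwo : (2 : ℝ) ^ (2 * α - 1) = 2 * 2 ^ (2 * α - 2) := by
    rw [show 2 * α - 1 = 1 + (2 * α - 2) by ring, rpow_add two_pos, rpow_one]
  calc _ = ∫ r in Ioo t s, s * t / r ^ 2 * g (r - s * t / r) := by
        rw [← integral_const_mul]
        exact setIntegral_congr_fun measurableSet_Ioo fun r hr =>
          (mul_div_sq_mul_rpow_sq_sub_sq_sub_mul_div α ht.le hr).symm
    _ = (∫ w in Ioo (t - s) (s - t), g w) / 2 := by
        rw [hg.integral_Ioo_eq_two_smul_integral_comp_sub_mul_div ht hts.le hgi]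
        simp only [smul_eq_mul]
        ring
    _ = _ := by
        rw [hgI, mul_rpow zero_le_two hc.le, htwo]
        ring
end

section
/- Let f be a continuous function on ℍⁿ with f(x) = O(x_{n+1}^{-μ}) where μ > k−1, and 1 ≤ k ≤ n−1. Then the totally geodesic Radon transform (Rf)(ξ) is finite for every k-dimensional totally geodesic submanifold ξ ⊂ ℍⁿ. The key geometric ingredient: if x_ξ is the point of ξ closest to the origin x₀ and x ∈ ξ, then cosh d(x₀,x) = cosh d(x₀,x_ξ)·cosh d(x_ξ,x), so |(Rf)(ξ)| ≤ c·(cosh d(x₀,x_ξ))^{-μ}·σ_{k-1} ∫₁^∞ (s²−1)^{k/2−1} s^{-μ} ds, which is finite for μ > k−1. -/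
/-!
A Lorentz matrix `A` satisfies `Aᵀ G A = G` for `G = diag(-1, …, -1, 1)`, hence also
`A G Aᵀ = G`, so its last row `w` is a unit future timelike vector: `[w, w] = 1`, `w_{n+1} > 0`.
By Cauchy–Schwarz, `(A x)_{n+1} = w ⬝ x ≥ (w_{n+1} - |w'|) x_{n+1}` on `ℍⁿ`, with
`w_{n+1} - |w'| > 0`; this one-sided form of `cosh d(x₀, x) = cosh d(x₀, x_ξ) cosh d(x_ξ, x)`
is all that is needed. So `f ∘ A` is again `O(x_{n+1}^{-μ})` (as `μ ≥ 0`), and on the graph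
`x_{n+1} = √(1 + |v|²)` the integrand is `O((1 + |v|²)^{-(μ+1)/2})`, integrable on `ℝᵏ`
because `μ + 1 > k`.
-/

open MeasureTheory Real Set Matrix

/-- The Minkowski bilinear form `[x,y] = x_{n+1} y_{n+1} - x₁y₁ - ⋯ - xₙyₙ` on `ℝ^{n+1}`
(the time coordinate being the last one). -/
noncomputable def mink (n : ℕ) (x y : Fin (n + 1) → ℝ) : ℝ :=
  x (Fin.last n) * y (Fin.last n) - ∑ i : Fin n, x i.castSucc * y i.castSucc

/-- The hyperboloid model of `ℍⁿ`: the upper sheet of `[x,x] = 1`. -/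
def hypSet (n : ℕ) : Set (Fin (n + 1) → ℝ) :=
  {x | mink n x x = 1 ∧ 0 < x (Fin.last n)}

/-- `A` belongs to the (orthochronous) Lorentz group `O(n,1)`: it preserves the Minkowski
form and the upper sheet. -/
def IsLorentz (n : ℕ) (A : Matrix (Fin (n + 1)) (Fin (n + 1)) ℝ) : Prop :=
  (∀ x y, mink n (A.mulVec x) (A.mulVec y) = mink n x y) ∧
    0 < (A.mulVec fun i => if (i : ℕ) = n then 1 else 0) (Fin.last n)

/-- Graph parameterization of the totally geodesic submanifold `ℍᵏ ⊂ ℍⁿ` (first `k` spatial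
coordinates and the time coordinate). -/
noncomputable def hLift (k n : ℕ) (v : EuclideanSpace ℝ (Fin k)) : Fin (n + 1) → ℝ :=
  fun i => if h : (i : ℕ) < k then v ⟨i, h⟩
    else if (i : ℕ) = n then Real.sqrt (1 + ‖v‖ ^ 2) else 0

noncomputable def minkMetric (n : ℕ) : Matrix (Fin (n + 1)) (Fin (n + 1)) ℝ :=
  diagonal fun i => if i = Fin.last n then 1 else -1

section Minkowski

variable {n : ℕ}

theorem mink_eq_dotProduct (x y : Fin (n + 1) → ℝ) :
    mink n x y = x ⬝ᵥ minkMetric n *ᵥ y := by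
  simp only [mink, dotProduct, minkMetric, mulVec_diagonal, ite_mul, one_mul, neg_mul, mul_ite,
    mul_neg, Fin.sum_univ_castSucc, Fin.castSucc_ne_last, ↓reduceIte, Finset.sum_neg_distrib]
  ring

theorem mink_self (x : Fin (n + 1) → ℝ) :
    mink n x x = x (Fin.last n) ^ 2 - ∑ i : Fin n, x i.castSucc ^ 2 := by
  simp only [mink, sq]

theorem minkMetric_mul_self : minkMetric n * minkMetric n = 1 := by
  rw [minkMetric, diagonal_mul_diagonal, ← diagonal_one]
  congr 1
  ext i
  split_ifs <;> norm_num

theorem mink_mulVec_mulVec (A : Matrix (Fin (n + 1)) (Fin (n + 1)) ℝ) (x y : Fin (n + 1) → ℝ) :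
    mink n (A *ᵥ x) (A *ᵥ y) = x ⬝ᵥ (Aᵀ * minkMetric n * A) *ᵥ y := by
  rw [mink_eq_dotProduct, ← mulVec_mulVec, ← mulVec_mulVec, dotProduct_mulVec x Aᵀ,
    vecMul_transpose]

theorem mink_mulVec_mulVec_eq_iff (A : Matrix (Fin (n + 1)) (Fin (n + 1)) ℝ) :
    (∀ x y, mink n (A *ᵥ x) (A *ᵥ y) = mink n x y) ↔ Aᵀ * minkMetric n * A = minkMetric n := by
  simp_rw [mink_mulVec_mulVec, mink_eq_dotProduct]
  refine ⟨fun h => ?_, fun h x y => by rw [h]⟩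
  ext i j
  simpa only [mulVec_single_one, single_one_dotProduct, col_apply, transpose_apply]
    using h (Pi.single i 1) (Pi.single j 1)

theorem mink_transpose_mulVec_mulVec {A : Matrix (Fin (n + 1)) (Fin (n + 1)) ℝ}
    (hA : ∀ x y, mink n (A *ᵥ x) (A *ᵥ y) = mink n x y) (x y : Fin (n + 1) → ℝ) :
    mink n (Aᵀ *ᵥ x) (Aᵀ *ᵥ y) = mink n x y := by
  set G := minkMetric n
  have hGG : G * G = 1 := minkMetric_mul_self
  have hAGA : Aᵀ * G * A = G := (mink_mulVec_mulVec_eq_iff A).1 hA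
  have hinv : A * (G * Aᵀ * G) = 1 := mul_eq_one_comm.1 <| by
    rw [show G * Aᵀ * G * A = G * (Aᵀ * G * A) by simp only [Matrix.mul_assoc], hAGA, hGG]
  refine (mink_mulVec_mulVec_eq_iff Aᵀ).2 ?_ x y
  calc Aᵀᵀ * G * Aᵀ = A * (G * Aᵀ * G) * G := by
        simp only [transpose_transpose, Matrix.mul_assoc, hGG, Matrix.mul_one]
    _ = G := by rw [hinv, Matrix.one_mul]

theorem IsLorentz.mink_row_last {A : Matrix (Fin (n + 1)) (Fin (n + 1)) ℝ} (hA : IsLorentz n A) :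
    mink n (A (Fin.last n)) (A (Fin.last n)) = 1 := by
  have := mink_transpose_mulVec_mulVec hA.1 (Pi.single (Fin.last n) 1) (Pi.single (Fin.last n) 1)
  simpa [mulVec_single_one, mink, Fin.castSucc_ne_last] using this

theorem IsLorentz.last_last_pos {A : Matrix (Fin (n + 1)) (Fin (n + 1)) ℝ} (hA : IsLorentz n A) :
    0 < A (Fin.last n) (Fin.last n) := by
  have he : (fun i : Fin (n + 1) => if (i : ℕ) = n then (1 : ℝ) else 0) =
      Pi.single (Fin.last n) 1 := by
    ext i
    simp [Pi.single_apply, Fin.ext_iff]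
  simpa [he, mulVec_single_one] using hA.2

theorem sqrt_sum_sq_lt_of_mink_self_eq_one {w : Fin (n + 1) → ℝ} (hw : mink n w w = 1)
    (hpos : 0 < w (Fin.last n)) : √(∑ i : Fin n, w i.castSucc ^ 2) < w (Fin.last n) := by
  rw [Real.sqrt_lt' hpos]
  rw [mink_self] at hw
  linarith

theorem sub_sqrt_mul_last_le_dotProduct (w : Fin (n + 1) → ℝ) {x : Fin (n + 1) → ℝ}
    (hx : x ∈ hypSet n) :
    (w (Fin.last n) - √(∑ i : Fin n, w i.castSucc ^ 2)) * x (Fin.last n) ≤ w ⬝ᵥ x := by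
  have hCS := Real.sum_mul_le_sqrt_mul_sqrt Finset.univ (fun i : Fin n => -w i.castSucc)
    fun i => x i.castSucc
  simp only [neg_mul, Finset.sum_neg_distrib, neg_sq] at hCS
  have hx_last := (sqrt_sum_sq_lt_of_mink_self_eq_one hx.1 hx.2).le
  have := mul_le_mul_of_nonneg_left hx_last (Real.sqrt_nonneg (∑ i : Fin n, w i.castSucc ^ 2))
  rw [dotProduct, Fin.sum_univ_castSucc]
  linarith

theorem IsLorentz.exists_pos_mul_last_le {A : Matrix (Fin (n + 1)) (Fin (n + 1)) ℝ}
    (hA : IsLorentz n A) :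
    ∃ c > 0, ∀ x ∈ hypSet n, c * x (Fin.last n) ≤ (A *ᵥ x) (Fin.last n) :=
  ⟨_, sub_pos.2 (sqrt_sum_sq_lt_of_mink_self_eq_one hA.mink_row_last hA.last_last_pos),
    fun _ hx => sub_sqrt_mul_last_le_dotProduct _ hx⟩

theorem IsLorentz.mulVec_mem_hypSet {A : Matrix (Fin (n + 1)) (Fin (n + 1)) ℝ}
    (hA : IsLorentz n A) {x : Fin (n + 1) → ℝ} (hx : x ∈ hypSet n) : A *ᵥ x ∈ hypSet n := by
  obtain ⟨c, hc, hcA⟩ := hA.exists_pos_mul_last_le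
  exact ⟨(hA.1 x x).trans hx.1, (mul_pos hc hx.2).trans_le (hcA x hx)⟩

theorem IsLorentz.exists_abs_comp_mulVec_le {A : Matrix (Fin (n + 1)) (Fin (n + 1)) ℝ}
    (hA : IsLorentz n A) {f : (Fin (n + 1) → ℝ) → ℝ} {μ : ℝ} (hμ : 0 ≤ μ)
    (hf : ∃ C : ℝ, ∀ x ∈ hypSet n, |f x| ≤ C * x (Fin.last n) ^ (-μ)) :
    ∃ C : ℝ, ∀ x ∈ hypSet n, |f (A *ᵥ x)| ≤ C * x (Fin.last n) ^ (-μ) := by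
  obtain ⟨C, hC⟩ := hf
  obtain ⟨c, hc, hcA⟩ := hA.exists_pos_mul_last_le
  refine ⟨|C| * c ^ (-μ), fun x hx => ?_⟩
  calc |f (A *ᵥ x)| ≤ C * (A *ᵥ x) (Fin.last n) ^ (-μ) := hC _ (hA.mulVec_mem_hypSet hx)
    _ ≤ |C| * (c * x (Fin.last n)) ^ (-μ) :=
        mul_le_mul (le_abs_self C)
          (Real.rpow_le_rpow_of_nonpos (mul_pos hc hx.2) (hcA x hx) (neg_nonpos.2 hμ))
          (Real.rpow_nonneg (hA.mulVec_mem_hypSet hx).2.le _) (abs_nonneg C)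
    _ = |C| * c ^ (-μ) * x (Fin.last n) ^ (-μ) := by
        rw [Real.mul_rpow hc.le hx.2.le, mul_assoc]

end Minkowski

section GraphParametrization

variable {k n : ℕ}

theorem hLift_last (hkn : k ≤ n) (v : EuclideanSpace ℝ (Fin k)) :
    hLift k n v (Fin.last n) = √(1 + ‖v‖ ^ 2) := by
  simp [hLift, hkn.not_gt]

theorem sum_hLift_castSucc_sq (hkn : k ≤ n) (v : EuclideanSpace ℝ (Fin k)) :
    ∑ i : Fin n, hLift k n v i.castSucc ^ 2 = ‖v‖ ^ 2 := by
  rw [EuclideanSpace.real_norm_sq_eq]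
  refine (Fintype.sum_of_injective (Fin.castLE hkn) (Fin.castLE_injective hkn) _ _
    (fun i hi => ?_) fun j => ?_).symm
  · have hik : ¬ (i : ℕ) < k := fun h => hi ⟨⟨i, h⟩, rfl⟩
    simp [hLift, hik, i.isLt.ne]
  · simp [hLift]

theorem hLift_mem_hypSet (hkn : k ≤ n) (v : EuclideanSpace ℝ (Fin k)) :
    hLift k n v ∈ hypSet n := by
  refine ⟨?_, by rw [hLift_last hkn]; positivity⟩
  rw [mink_self, hLift_last hkn, sum_hLift_castSucc_sq hkn, Real.sq_sqrt (by positivity)]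
  ring

theorem continuous_hLift : Continuous (hLift k n) := by
  refine continuous_pi fun i => ?_
  unfold hLift
  split_ifs <;> fun_prop

end GraphParametrization

theorem integrable_div_sqrt_one_add_norm_sq {E : Type*} [NormedAddCommGroup E]
    [NormedSpace ℝ E] [FiniteDimensional ℝ E] [MeasurableSpace E] [BorelSpace E]
    (ν : Measure E) [ν.IsAddHaarMeasure] {F : E → ℝ} {C μ : ℝ}
    (hμ : (Module.finrank ℝ E : ℝ) < μ + 1) (hF : AEStronglyMeasurable F ν)
    (hbound : ∀ v, |F v| ≤ C * √(1 + ‖v‖ ^ 2) ^ (-μ)) :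
    Integrable (fun v => F v / √(1 + ‖v‖ ^ 2)) ν := by
  refine ((integrable_rpow_neg_one_add_norm_sq (μ := ν) hμ).const_mul C).mono'
    (hF.div₀ (by fun_prop)) (Filter.Eventually.of_forall fun v => ?_)
  have hs : 0 < √(1 + ‖v‖ ^ 2) := by positivity
  rw [Real.norm_eq_abs, abs_div, abs_of_pos hs, div_le_iff₀ hs,
    Real.rpow_div_two_eq_sqrt _ (by positivity), neg_add, Real.rpow_add hs, Real.rpow_neg_one,
    mul_assoc, inv_mul_cancel_right₀ hs.ne']
  exact hbound v

/-- The measure `dv / √(1 + ‖v‖²)` is the Riemannian volume of `ℍᵏ` in the graph coordinates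
`hLift`, so the integral is `(Rf)(A·ℍᵏ)`. -/
theorem hyperbolic_radon_Cmu_existence (n k : ℕ) (hk1 : 1 ≤ k) (hkn : k ≤ n - 1)
    (μ : ℝ) (hμ : (k : ℝ) - 1 < μ)
    (f : (Fin (n + 1) → ℝ) → ℝ)
    (hcont : ContinuousOn f (hypSet n))
    (hbound : ∃ C : ℝ, ∀ x ∈ hypSet n, |f x| ≤ C * (x (Fin.last n)) ^ (-μ)) :
    ∀ A : Matrix (Fin (n + 1)) (Fin (n + 1)) ℝ, IsLorentz n A →
      Integrable (fun v : EuclideanSpace ℝ (Fin k) =>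
        f (A.mulVec (hLift k n v)) / Real.sqrt (1 + ‖v‖ ^ 2)) := by
  intro A hA
  have hkn' : k ≤ n := by omega
  have hμ0 : 0 ≤ μ := by linarith [show (1 : ℝ) ≤ k by exact_mod_cast hk1]
  obtain ⟨C, hC⟩ := hA.exists_abs_comp_mulVec_le hμ0 hbound
  refine integrable_div_sqrt_one_add_norm_sq volume (C := C) (μ := μ) (by simp; linarith) ?_
    fun v => ?_
  · exact (hcont.comp_continuous (continuous_const.matrix_mulVec continuous_hLift)
      fun v => hA.mulVec_mem_hypSet (hLift_mem_hypSet hkn' v)).aestronglyMeasurable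
  · simpa only [hLift_last hkn'] using hC _ (hLift_mem_hypSet hkn' v)
end
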